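/- arXiv:2306.12932 — 3 statements merged into one kernel-verified Lean document; each statement's English description precedes it below -/
import Mathlib

section
/- For all complex u, v and τ with Im τ > 0, the identity 2·θ₁(u+v|2τ)·θ₄(u−v|2τ) = θ₁(u|τ)·θ₂(v|τ) + θ₂(u|τ)·θ₁(v|τ) holds, where θ₁, θ₂, θ₄ are the Jacobi theta functions. -/
open Complex

/-- Jacobi theta function θ₁(u|τ). -/
noncomputable def theta1 (u τ : ℂ) : ℂ :=
  -I * ∑' k : ℤ, (-1 : ℂ) ^ k * Complex.exp ((Real.pi : ℂ) * I * τ * ((k : ℂ) + 1/2) ^ 2) *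
      Complex.exp ((Real.pi : ℂ) * I * (2 * (k : ℂ) + 1) * u)

/-- Jacobi theta function θ₂(u|τ). -/
noncomputable def theta2 (u τ : ℂ) : ℂ :=
  ∑' k : ℤ, Complex.exp ((Real.pi : ℂ) * I * τ * ((k : ℂ) + 1/2) ^ 2) *
      Complex.exp ((Real.pi : ℂ) * I * (2 * (k : ℂ) + 1) * u)

/-- Jacobi theta function θ₃(u|τ). -/
noncomputable def theta3 (u τ : ℂ) : ℂ :=
  ∑' k : ℤ, Complex.exp ((Real.pi : ℂ) * I * τ * (k : ℂ) ^ 2) *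
      Complex.exp (2 * (Real.pi : ℂ) * I * (k : ℂ) * u)

/-- Jacobi theta function θ₄(u|τ). -/
noncomputable def theta4 (u τ : ℂ) : ℂ :=
  ∑' k : ℤ, (-1 : ℂ) ^ k * Complex.exp ((Real.pi : ℂ) * I * τ * (k : ℂ) ^ 2) *
      Complex.exp (2 * (Real.pi : ℂ) * I * (k : ℂ) * u)

namespace ThetaAdd

noncomputable def f1 (u τ : ℂ) (k : ℤ) : ℂ :=
  (-1 : ℂ) ^ k * Complex.exp ((Real.pi : ℂ) * I * τ * ((k : ℂ) + 1/2) ^ 2) *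
      Complex.exp ((Real.pi : ℂ) * I * (2 * (k : ℂ) + 1) * u)

noncomputable def f2 (u τ : ℂ) (k : ℤ) : ℂ :=
  Complex.exp ((Real.pi : ℂ) * I * τ * ((k : ℂ) + 1/2) ^ 2) *
      Complex.exp ((Real.pi : ℂ) * I * (2 * (k : ℂ) + 1) * u)

noncomputable def f4 (u τ : ℂ) (k : ℤ) : ℂ :=
  (-1 : ℂ) ^ k * Complex.exp ((Real.pi : ℂ) * I * τ * (k : ℂ) ^ 2) *
      Complex.exp (2 * (Real.pi : ℂ) * I * (k : ℂ) * u)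

lemma neg_one_zpow_exp (k : ℤ) :
    ((-1 : ℂ)) ^ k = Complex.exp ((k : ℂ) * ((Real.pi : ℂ) * I)) := by
  rw [Complex.exp_int_mul, Complex.exp_pi_mul_I]

lemma exp_eq_exp_of (A B : ℂ) (n : ℤ) (h : A = B + (n : ℂ) * (2 * (Real.pi : ℂ) * I)) :
    Complex.exp A = Complex.exp B := by
  rw [h, Complex.exp_add, Complex.exp_int_mul_two_pi_mul_I, mul_one]

lemma f1_eq (u τ : ℂ) (k : ℤ) :
    f1 u τ k = Complex.exp ((Real.pi : ℂ) * I * τ / 4 + (Real.pi : ℂ) * I * u) *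
      jacobiTheta₂_term k (u + τ / 2 + 1 / 2) τ := by
  simp only [f1, jacobiTheta₂_term, neg_one_zpow_exp, ← Complex.exp_add]
  congr 1
  ring

lemma f2_eq (u τ : ℂ) (k : ℤ) :
    f2 u τ k = Complex.exp ((Real.pi : ℂ) * I * τ / 4 + (Real.pi : ℂ) * I * u) *
      jacobiTheta₂_term k (u + τ / 2) τ := by
  simp only [f2, jacobiTheta₂_term, ← Complex.exp_add]
  congr 1
  ring

lemma f4_eq (u τ : ℂ) (k : ℤ) :
    f4 u τ k = jacobiTheta₂_term k (u + 1 / 2) τ := by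
  simp only [f4, jacobiTheta₂_term, neg_one_zpow_exp, ← Complex.exp_add]
  congr 1
  ring

lemma f1_norm_summable (u τ : ℂ) (hτ : 0 < τ.im) :
    Summable fun k : ℤ => ‖f1 u τ k‖ := by
  simp only [f1_eq]
  exact (((summable_jacobiTheta₂_term_iff _ τ).2 hτ).mul_left _).norm

lemma f2_norm_summable (u τ : ℂ) (hτ : 0 < τ.im) :
    Summable fun k : ℤ => ‖f2 u τ k‖ := by
  simp only [f2_eq]
  exact (((summable_jacobiTheta₂_term_iff _ τ).2 hτ).mul_left _).norm

lemma f4_norm_summable (u τ : ℂ) (hτ : 0 < τ.im) :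
    Summable fun k : ℤ => ‖f4 u τ k‖ := by
  simp only [f4_eq]
  exact ((summable_jacobiTheta₂_term_iff _ τ).2 hτ).norm

lemma eq1 (u v τ : ℂ) (m n : ℤ) :
    f1 u τ (m + n) * f2 v τ (m - n) = f1 (u + v) (2 * τ) m * f4 (u - v) (2 * τ) n := by
  simp only [f1, f2, f4, neg_one_zpow_exp, ← Complex.exp_add]
  apply exp_eq_exp_of _ _ 0
  push_cast
  ring

lemma eq2 (u v τ : ℂ) (m n : ℤ) :
    f2 u τ (m + n) * f1 v τ (m - n) = f1 (u + v) (2 * τ) m * f4 (u - v) (2 * τ) n := by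
  simp only [f1, f2, f4, neg_one_zpow_exp, ← Complex.exp_add]
  apply exp_eq_exp_of _ _ (-n)
  push_cast
  ring

lemma pointwise (u v τ : ℂ) (m n : ℤ) :
    2 * (f1 (u + v) (2 * τ) m * f4 (u - v) (2 * τ) n) =
      f1 u τ (m + n) * f2 v τ (m - n) + f2 u τ (m + n) * f1 v τ (m - n) := by
  rw [eq1, eq2]; ring

lemma f1_as_f2 (u τ : ℂ) (k : ℤ) : f1 u τ k = (-1 : ℂ) ^ k * f2 u τ k := by
  simp only [f1, f2]; ring

end ThetaAdd

open ThetaAdd in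
theorem theta_addition_formula (u v τ : ℂ) (hτ : 0 < τ.im) :
    2 * theta1 (u + v) (2 * τ) * theta4 (u - v) (2 * τ) =
      theta1 u τ * theta2 v τ + theta2 u τ * theta1 v τ := by
  have h2 : 0 < (2 * τ).im := by
    rw [Complex.mul_im]
    norm_num
    linarith
  have hA := f1_norm_summable (u + v) (2 * τ) h2
  have hB := f4_norm_summable (u - v) (2 * τ) h2
  have hC := f1_norm_summable u τ hτ
  have hD := f2_norm_summable v τ hτ
  have hE := f2_norm_summable u τ hτ
  have hF := f1_norm_summable v τ hτ
  have e1 : theta1 (u + v) (2 * τ) = -I * ∑' k : ℤ, f1 (u + v) (2 * τ) k := rfl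
  have e4 : theta4 (u - v) (2 * τ) = ∑' k : ℤ, f4 (u - v) (2 * τ) k := rfl
  have e1u : theta1 u τ = -I * ∑' k : ℤ, f1 u τ k := rfl
  have e2v : theta2 v τ = ∑' k : ℤ, f2 v τ k := rfl
  have e2u : theta2 u τ = ∑' k : ℤ, f2 u τ k := rfl
  have e1v : theta1 v τ = -I * ∑' k : ℤ, f1 v τ k := rfl
  rw [e1, e4, e1u, e2v, e2u, e1v]
  -- reduce to the statement without the factor -I
  have key : 2 * ((∑' k : ℤ, f1 (u + v) (2 * τ) k) * ∑' k : ℤ, f4 (u - v) (2 * τ) k) =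
      (∑' k : ℤ, f1 u τ k) * (∑' k : ℤ, f2 v τ k) +
        (∑' k : ℤ, f2 u τ k) * (∑' k : ℤ, f1 v τ k) := by
    rw [tsum_mul_tsum_of_summable_norm hA hB, tsum_mul_tsum_of_summable_norm hC hD,
      tsum_mul_tsum_of_summable_norm hE hF, ← tsum_mul_left,
      ← Summable.tsum_add (summable_mul_of_summable_norm hC hD) (summable_mul_of_summable_norm hE hF)]
    -- reindex by (m, n) ↦ (m + n, m - n)
    have hinj : Function.Injective (fun p : ℤ × ℤ => (p.1 + p.2, p.1 - p.2)) := by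
      intro p q h
      simp only [Prod.mk.injEq, Prod.ext_iff] at h ⊢
      omega
    have hsupp : Function.support
        (fun p : ℤ × ℤ => f1 u τ p.1 * f2 v τ p.2 + f2 u τ p.1 * f1 v τ p.2) ⊆
        Set.range (fun p : ℤ × ℤ => (p.1 + p.2, p.1 - p.2)) := by
      rintro ⟨j, k⟩ hjk
      by_contra hr
      apply hjk
      rcases Int.even_or_odd (j - k) with ⟨t, ht⟩ | ⟨t, ht⟩
      · exact absurd ⟨(k + t, t), by simp only [Prod.mk.injEq]; omega⟩ hr
      · have hj : j = k + 2 * t + 1 := by omega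
        have hsgn : ((-1 : ℂ)) ^ j = -((-1 : ℂ)) ^ k := by
          rw [hj, zpow_add₀ (by norm_num : (-1 : ℂ) ≠ 0),
            zpow_add₀ (by norm_num : (-1 : ℂ) ≠ 0), zpow_one, zpow_mul]
          norm_num
        simp only [f1_as_f2, hsgn]
        ring
    rw [← hinj.tsum_eq hsupp]
    exact tsum_congr fun p => pointwise u v τ p.1 p.2
  linear_combination (-I) * key
end

section
/- For τ with Im τ > 0, the derivative identity θ₁′(0|τ)/θ₁′(0|2τ) = 2·θ₄(0|2τ)/θ₂(0|τ) holds, where θ₁′ denotes the derivative of θ₁ with respect to its first argument. -/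
open Complex

/-!
Multiplying the series, `θ₁'(0|τ) θ₂(0|τ)` is a double sum over `(k, l) ∈ ℤ²` of
`π (2k+1) (-1)^k q^((k+½)² + (l+½)²)`. The summand is invariant under `l ↦ -1 - l`, which swaps
the parity of `k + l`, so the sum is twice its part over even `k + l`. There
`(k, l) = (a + b, b - a)` and `(k+½)² + (l+½)² = 2a² + 2(b+½)²`, a `θ₄` exponent plus a `θ₂`
exponent for the nome `q²`. Splitting `2k + 1 = (2b + 1) + 2a` yields `θ₄(0|2τ) θ₁'(0|2τ)` plus a
term that is odd in `a`, hence zero.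
-/

open Real

section Reindexing

variable {α : Type*}

theorem tsum_eq_zero_of_odd {β : Type*} [InvolutiveNeg β] [AddCommGroup α] [TopologicalSpace α]
    [IsTopologicalAddGroup α] [T2Space α] [IsAddTorsionFree α] {f : β → α}
    (hf : ∀ x, f (-x) = -f x) : ∑' x, f x = 0 := by
  rw [← self_eq_neg, ← tsum_neg, ← tsum_comp_neg f]
  simp only [hf]

/-- Since `l ↦ -1 - l` swaps the parity of `k + l`, the sum is twice its part over even `k + l`,
which `(a, b) ↦ (a + b, b - a)` parametrises. -/
theorem tsum_int_prod_eq_two_nsmul_of_reflect [UniformSpace α] [AddCommGroup α]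
    [IsUniformAddGroup α] [CompleteSpace α] [T2Space α] {f : ℤ × ℤ → α} (hf : Summable f)
    (hrefl : ∀ k l, f (k, -1 - l) = f (k, l)) :
    ∑' p, f p = 2 • ∑' p : ℤ × ℤ, f (p.1 + p.2, p.2 - p.1) := by
  set s : Set (ℤ × ℤ) := {p | Even (p.1 + p.2)}
  have h_even : ∑' p, s.indicator f p = ∑' p : ℤ × ℤ, f (p.1 + p.2, p.2 - p.1) := by
    have hinj : Function.Injective fun p : ℤ × ℤ => (p.1 + p.2, p.2 - p.1) := by
      intro p q h
      simp only [Prod.mk.injEq] at h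
      ext <;> omega
    rw [← hinj.tsum_eq]
    · refine tsum_congr fun p => Set.indicator_of_mem ?_ f
      exact ⟨p.2, by simp only; ring⟩
    · rintro ⟨k, l⟩ hp
      obtain ⟨m, hm⟩ : (k, l) ∈ s := Set.mem_of_indicator_ne_zero hp
      exact ⟨(m - l, m), by simp only [Prod.mk.injEq]; omega⟩
  have h_odd : ∑' p, sᶜ.indicator f p = ∑' p, s.indicator f p := by
    rw [← ((Equiv.refl ℤ).prodCongr (Equiv.subLeft (-1))).tsum_eq]
    refine tsum_congr fun ⟨k, l⟩ => ?_
    have hpar : (k, -1 - l) ∈ sᶜ ↔ (k, l) ∈ s := by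
      simp [s, Int.even_add, Int.even_sub, -Int.not_even_iff_odd]
      tauto
    by_cases h : (k, l) ∈ s
    · simp [Set.indicator_of_mem h, Set.indicator_of_mem (hpar.2 h), hrefl]
    · simp [Set.indicator_of_notMem h, Set.indicator_of_notMem (mt hpar.1 h)]
  calc ∑' p, f p = ∑' p, (s.indicator f p + sᶜ.indicator f p) := by
        simp only [Set.indicator_self_add_compl_apply]
    _ = 2 • ∑' p : ℤ × ℤ, f (p.1 + p.2, p.2 - p.1) := by
        rw [(hf.indicator s).tsum_add (hf.indicator sᶜ), h_odd, h_even, two_nsmul]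

end Reindexing

/-- `q ^ x` for the nome `q = exp (π i τ)`. -/
noncomputable def nomePow (τ x : ℂ) : ℂ := cexp (π * I * τ * x)

theorem nomePow_add (τ x y : ℂ) : nomePow τ (x + y) = nomePow τ x * nomePow τ y := by
  rw [nomePow, nomePow, nomePow, ← Complex.exp_add, mul_add]

theorem nomePow_two_mul (τ x : ℂ) : nomePow (2 * τ) x = nomePow τ (2 * x) := by
  rw [nomePow, nomePow]; ring_nf

theorem neg_one_zpow_eq_exp (k : ℤ) : (-1 : ℂ) ^ k = cexp (k * (π * I)) := by
  rw [Complex.exp_int_mul, Complex.exp_pi_mul_I]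

noncomputable def theta2Term (τ : ℂ) (k : ℤ) : ℂ := nomePow τ ((k + 1 / 2) ^ 2)

noncomputable def theta4Term (τ : ℂ) (k : ℤ) : ℂ := (-1) ^ k * nomePow τ (k ^ 2)

noncomputable def theta1DerivTerm (τ : ℂ) (k : ℤ) : ℂ :=
  π * (2 * k + 1) * (-1) ^ k * theta2Term τ k

theorem theta2_zero_eq_tsum (τ : ℂ) : theta2 0 τ = ∑' k, theta2Term τ k := by
  simp [theta2, theta2Term, nomePow]

theorem theta4_zero_eq_tsum (τ : ℂ) : theta4 0 τ = ∑' k, theta4Term τ k := by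
  simp [theta4, theta4Term, nomePow]

theorem theta2Term_eq_jacobiTheta₂_term (τ : ℂ) (k : ℤ) :
    theta2Term τ k = nomePow τ (1 / 4) * jacobiTheta₂_term k (τ / 2) τ := by
  rw [theta2Term, jacobiTheta₂_term, nomePow, nomePow, ← Complex.exp_add]
  ring_nf

theorem theta4Term_eq_jacobiTheta₂_term (τ : ℂ) (k : ℤ) :
    theta4Term τ k = jacobiTheta₂_term k (1 / 2) τ := by
  rw [theta4Term, jacobiTheta₂_term, nomePow, neg_one_zpow_eq_exp, ← Complex.exp_add]
  ring_nf

theorem theta1DerivTerm_eq_jacobiTheta₂_term (τ : ℂ) (k : ℤ) :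
    theta1DerivTerm τ k = -I * nomePow τ (1 / 4) *
      (π * I * jacobiTheta₂_term k ((τ + 1) / 2) τ + jacobiTheta₂'_term k ((τ + 1) / 2) τ) := by
  have hexp : (-1 : ℂ) ^ k * theta2Term τ k =
      nomePow τ (1 / 4) * jacobiTheta₂_term k ((τ + 1) / 2) τ := by
    rw [theta2Term, jacobiTheta₂_term, nomePow, nomePow, neg_one_zpow_eq_exp, ← Complex.exp_add,
      ← Complex.exp_add]
    ring_nf
  rw [jacobiTheta₂'_term, theta1DerivTerm, mul_assoc _ ((-1 : ℂ) ^ k), hexp]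
  linear_combination
    (π * (2 * k + 1) * nomePow τ (1 / 4) * jacobiTheta₂_term k ((τ + 1) / 2) τ) * I_mul_I

theorem theta2Term_neg_one_sub (τ : ℂ) (k : ℤ) : theta2Term τ (-1 - k) = theta2Term τ k := by
  rw [theta2Term, theta2Term]; push_cast; ring_nf

theorem int_mul_theta4Term_eq_jacobiTheta₂'_term (τ : ℂ) (k : ℤ) :
    k * theta4Term τ k = jacobiTheta₂'_term k (1 / 2) τ / (2 * π * I) := by
  rw [jacobiTheta₂'_term, theta4Term_eq_jacobiTheta₂_term]
  field_simp

theorem theta4Term_neg (τ : ℂ) (k : ℤ) : theta4Term τ (-k) = theta4Term τ k := by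
  rw [theta4Term, theta4Term, zpow_neg, ← inv_zpow, inv_neg_one]
  push_cast
  ring_nf

section Summability

variable {τ : ℂ} (hτ : 0 < τ.im)
include hτ

theorem summable_norm_theta2Term : Summable fun k => ‖theta2Term τ k‖ :=
  summable_norm_iff.mpr <| (((summable_jacobiTheta₂_term_iff _ _).mpr hτ).mul_left _).congr
    fun k => (theta2Term_eq_jacobiTheta₂_term τ k).symm

theorem summable_norm_theta4Term : Summable fun k => ‖theta4Term τ k‖ :=
  summable_norm_iff.mpr <| ((summable_jacobiTheta₂_term_iff _ _).mpr hτ).congr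
    fun k => (theta4Term_eq_jacobiTheta₂_term τ k).symm

theorem summable_norm_theta1DerivTerm : Summable fun k => ‖theta1DerivTerm τ k‖ :=
  summable_norm_iff.mpr <| (((((summable_jacobiTheta₂_term_iff _ _).mpr hτ).mul_left _).add
    ((summable_jacobiTheta₂'_term_iff _ _).mpr hτ)).mul_left _).congr
    fun k => (theta1DerivTerm_eq_jacobiTheta₂_term τ k).symm

theorem summable_norm_int_mul_theta4Term : Summable fun k : ℤ => ‖k * theta4Term τ k‖ :=
  summable_norm_iff.mpr <| (((summable_jacobiTheta₂'_term_iff _ _).mpr hτ).div_const _).congr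
    fun k => (int_mul_theta4Term_eq_jacobiTheta₂'_term τ k).symm

end Summability

theorem theta1_eq_jacobiTheta₂ (u τ : ℂ) :
    theta1 u τ =
      -I * nomePow τ (1 / 4) * cexp (π * I * u) * jacobiTheta₂ (u + (τ + 1) / 2) τ := by
  rw [theta1, jacobiTheta₂, ← tsum_mul_left, ← tsum_mul_left]
  refine tsum_congr fun k => ?_
  rw [neg_one_zpow_eq_exp, jacobiTheta₂_term, nomePow]
  simp only [mul_assoc, ← Complex.exp_add]
  ring_nf

theorem hasDerivAt_theta1_zero {τ : ℂ} (hτ : 0 < τ.im) :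
    HasDerivAt (theta1 · τ) (∑' k, theta1DerivTerm τ k) 0 := by
  have h_exp : HasDerivAt (fun u : ℂ => cexp (π * I * u)) (π * I) 0 := by
    simpa using ((hasDerivAt_id (0 : ℂ)).const_mul (π * I)).cexp
  have h_theta : HasDerivAt (fun u => jacobiTheta₂ (u + (τ + 1) / 2) τ)
      (jacobiTheta₂' ((τ + 1) / 2) τ) 0 := by
    simpa using (hasDerivAt_jacobiTheta₂_fst (0 + (τ + 1) / 2) hτ).comp_add_const 0 ((τ + 1) / 2)
  rw [funext fun u => theta1_eq_jacobiTheta₂ u τ]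
  refine ((h_exp.const_mul (-I * nomePow τ (1 / 4))).mul h_theta).congr_deriv ?_
  rw [tsum_congr (theta1DerivTerm_eq_jacobiTheta₂_term τ), tsum_mul_left,
    (((summable_jacobiTheta₂_term_iff _ _).mpr hτ).mul_left _).tsum_add
      ((summable_jacobiTheta₂'_term_iff _ _).mpr hτ),
    tsum_mul_left, jacobiTheta₂, jacobiTheta₂']
  simp only [mul_zero, Complex.exp_zero, zero_add, mul_one]
  ring

theorem theta1DerivTerm_mul_theta2Term (τ : ℂ) (a b : ℤ) :
    theta1DerivTerm τ (a + b) * theta2Term τ (b - a) =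
      theta4Term (2 * τ) a * theta1DerivTerm (2 * τ) b +
        a * theta4Term (2 * τ) a * (2 * π * (-1) ^ b * theta2Term (2 * τ) b) := by
  have hexp : theta2Term τ (a + b) * theta2Term τ (b - a) =
      nomePow (2 * τ) (a ^ 2) * theta2Term (2 * τ) b := by
    rw [theta2Term, theta2Term, theta2Term, ← nomePow_add, ← nomePow_add, nomePow_two_mul]
    push_cast
    ring_nf
  rw [theta1DerivTerm, theta1DerivTerm, theta4Term, zpow_add₀ (by norm_num)]
  push_cast
  linear_combination (π * (2 * (a + b) + 1) * (-1) ^ a * (-1) ^ b) * hexp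

theorem tsum_theta1DerivTerm_mul_tsum_theta2Term {τ : ℂ} (hτ : 0 < τ.im) :
    (∑' k, theta1DerivTerm τ k) * ∑' l, theta2Term τ l =
      2 * (∑' a, theta4Term (2 * τ) a) * ∑' b, theta1DerivTerm (2 * τ) b := by
  have h2τ : 0 < (2 * τ).im := by simpa using hτ
  have hθ₁' := summable_norm_theta1DerivTerm hτ
  have hθ₂ := summable_norm_theta2Term hτ
  have hθ₁'₂ := summable_norm_theta1DerivTerm h2τ
  have hθ₄₂ := summable_norm_theta4Term h2τ
  have h_mul := summable_norm_int_mul_theta4Term h2τ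
  have h_alt : Summable fun b : ℤ => ‖2 * π * (-1) ^ b * theta2Term (2 * τ) b‖ :=
    ((summable_norm_theta2Term h2τ).mul_left (2 * π)).congr fun b => by simp [abs_of_pos pi_pos]
  have h_odd : ∑' a : ℤ, a * theta4Term (2 * τ) a = 0 :=
    tsum_eq_zero_of_odd fun a => by rw [theta4Term_neg]; push_cast; ring
  calc (∑' k, theta1DerivTerm τ k) * ∑' l, theta2Term τ l
      = ∑' p : ℤ × ℤ, theta1DerivTerm τ p.1 * theta2Term τ p.2 :=
        tsum_mul_tsum_of_summable_norm hθ₁' hθ₂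
    _ = 2 • ∑' p : ℤ × ℤ, theta1DerivTerm τ (p.1 + p.2) * theta2Term τ (p.2 - p.1) :=
        tsum_int_prod_eq_two_nsmul_of_reflect (summable_mul_of_summable_norm hθ₁' hθ₂)
          fun k l => by rw [theta2Term_neg_one_sub]
    _ = 2 • ((∑' a, theta4Term (2 * τ) a) * (∑' b, theta1DerivTerm (2 * τ) b) +
          (∑' a : ℤ, a * theta4Term (2 * τ) a) *
            ∑' b : ℤ, 2 * π * (-1) ^ b * theta2Term (2 * τ) b) := by
        simp_rw [theta1DerivTerm_mul_theta2Term]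
        rw [(summable_mul_of_summable_norm hθ₄₂ hθ₁'₂).tsum_add
            (summable_mul_of_summable_norm h_mul h_alt),
          tsum_mul_tsum_of_summable_norm hθ₄₂ hθ₁'₂, tsum_mul_tsum_of_summable_norm h_mul h_alt]
    _ = 2 * (∑' a, theta4Term (2 * τ) a) * ∑' b, theta1DerivTerm (2 * τ) b := by
        rw [h_odd, zero_mul, add_zero, nsmul_eq_mul, Nat.cast_ofNat, mul_assoc]

theorem theta_derivative_ratio (τ : ℂ) (hτ : 0 < τ.im)
    (h1 : deriv (fun u => theta1 u (2 * τ)) 0 ≠ 0)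
    (h2 : theta2 0 τ ≠ 0) :
    deriv (fun u => theta1 u τ) 0 / deriv (fun u => theta1 u (2 * τ)) 0 =
      2 * theta4 0 (2 * τ) / theta2 0 τ := by
  have h2τ : 0 < (2 * τ).im := by simpa using hτ
  rw [(hasDerivAt_theta1_zero h2τ).deriv] at h1 ⊢
  rw [theta2_zero_eq_tsum] at h2 ⊢
  rw [(hasDerivAt_theta1_zero hτ).deriv, theta4_zero_eq_tsum, div_eq_div_iff h1 h2]
  exact tsum_theta1DerivTerm_mul_tsum_theta2Term hτ
end

section
/- Let v₁, vₙ, u₁, x be complex numbers. Then 1 + [θ₁(2v₁−2u₁|2τ)/θ₁(2vₙ−2u₁|2τ)] · [(θ₁(2x|2τ)θ₄(2vₙ−2u₁|2τ) − θ₄(2x|2τ)θ₁(2vₙ−2u₁|2τ)) / (θ₄(2x|2τ)θ₁(2v₁−2u₁|2τ) − θ₁(2x|2τ)θ₄(2v₁−2u₁|2τ))] = [θ₁(v₁−vₙ|τ)·θ₂(v₁+vₙ−2u₁|τ)·θ₁(x|τ)·θ₂(x|τ)] / [θ₁(vₙ−u₁|τ)·θ₂(vₙ−u₁|τ)·θ₁(v₁−u₁−x|τ)·θ₂(v₁−u₁+x|τ)],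 whenever all denominators are nonzero. -/
open Complex

/-!
With `θ[a](z|τ) = ∑ₙ exp(πiτ(n + a)² + 2πi(n + a)z)`, the functions θ₂, θ₄ and `-θ₁` are
`θ[a]` with `a ∈ {0, ½}` at `u` or `u + ½`. A product `θ[a](z|τ) θ[b](w|τ)` is a sum over
`(m, n) ∈ ℤ²`; splitting by the parity of `m + n` and substituting `m = p + r`,
`n = p - r` (resp. `p - r - 1`) turns it into two products of level-`2τ` theta functions at
`z ± w`, since `τ(X² + Y²) = 2τ((X + Y)/2)² + 2τ((X - Y)/2)²`. Together with the parities of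
θ₁ and θ₄ this expresses each product θ₁θ₂ on the right-hand side through θ₁ and θ₄ of level
`2τ`, and the identity becomes a rational identity in these values in which `θ₄(0|2τ)` cancels.
-/

open Real

lemma bijective_sumElim_add_sub :
    Function.Bijective (Sum.elim (fun q : ℤ × ℤ ↦ (q.1 + q.2, q.1 - q.2))
      (fun q : ℤ × ℤ ↦ (q.1 + q.2, q.1 - q.2 - 1))) := by
  constructor
  · rintro (⟨p, r⟩ | ⟨p, r⟩) (⟨p', r'⟩ | ⟨p', r'⟩) h <;>
      simp only [Sum.elim_inl, Sum.elim_inr, Prod.mk.injEq, Sum.inl.injEq, Sum.inr.injEq,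
        reduceCtorEq] at h ⊢ <;> omega
  · rintro ⟨m, n⟩
    rcases Int.even_or_odd' (m + n) with ⟨k, hk | hk⟩
    · exact ⟨.inl (k, m - k), by simp only [Sum.elim_inl, Prod.mk.injEq]; omega⟩
    · exact ⟨.inr (k + 1, m - k - 1), by simp only [Sum.elim_inr, Prod.mk.injEq]; omega⟩

lemma tsum_int_prod_eq_even_add_odd {E : Type*} [NormedAddCommGroup E] [CompleteSpace E]
    {F : ℤ × ℤ → E} (hF : Summable F) :
    ∑' q, F q = ∑' q : ℤ × ℤ, F (q.1 + q.2, q.1 - q.2) +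
      ∑' q : ℤ × ℤ, F (q.1 + q.2, q.1 - q.2 - 1) := by
  set e := Equiv.ofBijective _ bijective_sumElim_add_sub
  rw [← e.tsum_eq]
  exact Summable.tsum_sum (hF.comp_injective (e.injective.comp Sum.inl_injective))
    (hF.comp_injective (e.injective.comp Sum.inr_injective))

lemma tsum_mul_tsum_eq_even_add_odd {R : Type*} [NormedRing R] [CompleteSpace R] {f g : ℤ → R}
    (hf : Summable fun n ↦ ‖f n‖) (hg : Summable fun n ↦ ‖g n‖) :
    (∑' n, f n) * ∑' n, g n = ∑' q : ℤ × ℤ, f (q.1 + q.2) * g (q.1 - q.2) +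
      ∑' q : ℤ × ℤ, f (q.1 + q.2) * g (q.1 - q.2 - 1) := by
  rw [tsum_mul_tsum_of_summable_norm hf hg]
  exact tsum_int_prod_eq_even_add_odd (summable_mul_of_summable_norm hf hg)

noncomputable def thetaCharTerm (a z τ : ℂ) (n : ℤ) : ℂ :=
  cexp (π * I * τ * (n + a) ^ 2 + 2 * π * I * (n + a) * z)

/-- The theta function with characteristics `[a, 0]`. -/
noncomputable def thetaChar (a z τ : ℂ) : ℂ :=
  ∑' n : ℤ, thetaCharTerm a z τ n

lemma thetaCharTerm_eq_mul_jacobiTheta₂_term (a z τ : ℂ) (n : ℤ) :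
    thetaCharTerm a z τ n =
      cexp (π * I * τ * a ^ 2 + 2 * π * I * a * z) * jacobiTheta₂_term n (z + a * τ) τ := by
  rw [thetaCharTerm, jacobiTheta₂_term, ← Complex.exp_add]
  ring_nf

lemma summable_norm_thetaCharTerm {τ : ℂ} (hτ : 0 < τ.im) (a z : ℂ) :
    Summable fun n ↦ ‖thetaCharTerm a z τ n‖ := by
  simp only [thetaCharTerm_eq_mul_jacobiTheta₂_term, norm_mul]
  exact ((summable_jacobiTheta₂_term_iff _ τ).mpr hτ).norm.mul_left _

lemma thetaCharTerm_add_mul_sub_sub (a b z w τ : ℂ) (p r c : ℤ) :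
    thetaCharTerm a z τ (p + r) * thetaCharTerm b w τ (p - r - c) =
      thetaCharTerm ((a + b - c) / 2) (z + w) (2 * τ) p *
        thetaCharTerm ((a - b + c) / 2) (z - w) (2 * τ) r := by
  simp only [thetaCharTerm, ← Complex.exp_add]
  push_cast
  ring_nf

lemma thetaChar_mul_thetaChar {τ : ℂ} (hτ : 0 < τ.im) (a b z w : ℂ) :
    thetaChar a z τ * thetaChar b w τ =
      thetaChar ((a + b) / 2) (z + w) (2 * τ) * thetaChar ((a - b) / 2) (z - w) (2 * τ) +
        thetaChar ((a + b - 1) / 2) (z + w) (2 * τ) *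
          thetaChar ((a - b + 1) / 2) (z - w) (2 * τ) := by
  have h2τ : 0 < (2 * τ).im := by simpa using hτ
  simp only [thetaChar]
  rw [tsum_mul_tsum_eq_even_add_odd (summable_norm_thetaCharTerm hτ a z)
      (summable_norm_thetaCharTerm hτ b w),
    tsum_mul_tsum_of_summable_norm (summable_norm_thetaCharTerm h2τ _ _)
      (summable_norm_thetaCharTerm h2τ _ _),
    tsum_mul_tsum_of_summable_norm (summable_norm_thetaCharTerm h2τ _ _)
      (summable_norm_thetaCharTerm h2τ _ _)]
  congr 1 <;> refine tsum_congr fun q ↦ ?_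
  · simpa using thetaCharTerm_add_mul_sub_sub a b z w τ q.1 q.2 0
  · simpa using thetaCharTerm_add_mul_sub_sub a b z w τ q.1 q.2 1

lemma thetaChar_neg (a z τ : ℂ) : thetaChar a (-z) τ = thetaChar (-a) z τ := by
  rw [thetaChar, thetaChar, ← (Equiv.neg ℤ).tsum_eq]
  refine tsum_congr fun n ↦ ?_
  simp only [thetaCharTerm, Equiv.neg_apply, Int.cast_neg]
  ring_nf

lemma thetaChar_add_intCast (a z τ : ℂ) (m : ℤ) : thetaChar (a + m) z τ = thetaChar a z τ := by
  rw [thetaChar, thetaChar, ← (Equiv.addRight m).tsum_eq (thetaCharTerm a z τ)]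
  refine tsum_congr fun n ↦ ?_
  simp only [thetaCharTerm, Equiv.coe_addRight, Int.cast_add]
  ring_nf

lemma thetaChar_add_one (a z τ : ℂ) :
    thetaChar a (z + 1) τ = cexp (2 * π * I * a) * thetaChar a z τ := by
  rw [thetaChar, thetaChar, ← tsum_mul_left]
  refine tsum_congr fun n ↦ ?_
  rw [thetaCharTerm, thetaCharTerm, ← Complex.exp_add,
    show π * I * τ * (n + a) ^ 2 + 2 * π * I * (n + a) * (z + 1) =
      2 * π * I * a + (π * I * τ * (n + a) ^ 2 + 2 * π * I * (n + a) * z) + n * (2 * π * I) by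
        ring,
    Complex.exp_add _ (n * _), Complex.exp_int_mul_two_pi_mul_I, mul_one]

lemma theta1_eq_neg_thetaChar (u τ : ℂ) : theta1 u τ = -thetaChar (1 / 2) (u + 1 / 2) τ := by
  rw [theta1, thetaChar, neg_mul, ← tsum_mul_left, neg_inj]
  refine tsum_congr fun k ↦ ?_
  rw [thetaCharTerm, show π * I * τ * (k + 1 / 2) ^ 2 + 2 * π * I * (k + 1 / 2) * (u + 1 / 2) =
      π * I * τ * (k + 1 / 2) ^ 2 + π * I * (2 * k + 1) * u + (k * (π * I) + π / 2 * I) by ring,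
    Complex.exp_add, Complex.exp_add, Complex.exp_add, Complex.exp_int_mul, Complex.exp_pi_mul_I,
    Complex.exp_pi_div_two_mul_I]
  ring

lemma theta2_eq_thetaChar (u τ : ℂ) : theta2 u τ = thetaChar (1 / 2) u τ := by
  refine tsum_congr fun k ↦ ?_
  rw [thetaCharTerm, ← Complex.exp_add]
  ring_nf

lemma theta4_eq_thetaChar (u τ : ℂ) : theta4 u τ = thetaChar 0 (u + 1 / 2) τ := by
  refine tsum_congr fun k ↦ ?_
  rw [thetaCharTerm, show π * I * τ * (k + 0) ^ 2 + 2 * π * I * (k + 0) * (u + 1 / 2) =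
      k * (π * I) + π * I * τ * k ^ 2 + 2 * π * I * k * u by ring,
    Complex.exp_add, Complex.exp_add, Complex.exp_int_mul, Complex.exp_pi_mul_I]

lemma theta1_neg (u τ : ℂ) : theta1 (-u) τ = -theta1 u τ := by
  have hneg : thetaChar (1 / 2) (-u + 1 / 2) τ = thetaChar (1 / 2) (u - 1 / 2) τ := by
    rw [show -u + 1 / 2 = -(u - 1 / 2) by ring, thetaChar_neg,
      show -(1 / 2 : ℂ) = 1 / 2 + ((-1 : ℤ) : ℂ) by push_cast; ring, thetaChar_add_intCast]
  have hshift : thetaChar (1 / 2) (u + 1 / 2) τ = -thetaChar (1 / 2) (u - 1 / 2) τ := by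
    rw [show u + 1 / 2 = u - 1 / 2 + 1 by ring, thetaChar_add_one,
      show 2 * π * I * (1 / 2 : ℂ) = π * I by ring, Complex.exp_pi_mul_I, neg_one_mul]
  rw [theta1_eq_neg_thetaChar, theta1_eq_neg_thetaChar, hneg, hshift, neg_neg]

lemma theta4_neg (u τ : ℂ) : theta4 (-u) τ = theta4 u τ := by
  rw [theta4_eq_thetaChar, theta4_eq_thetaChar, show -u + 1 / 2 = -(u - 1 / 2) by ring,
    thetaChar_neg, neg_zero, show u + 1 / 2 = u - 1 / 2 + 1 by ring, thetaChar_add_one,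
    mul_zero, Complex.exp_zero, one_mul]

lemma theta1_zero (τ : ℂ) : theta1 0 τ = 0 := by
  simpa [CharZero.eq_neg_self_iff] using theta1_neg 0 τ

lemma theta1_mul_theta2 {τ : ℂ} (hτ : 0 < τ.im) (a b : ℂ) :
    theta1 a τ * theta2 b τ =
      theta1 (a + b) (2 * τ) * theta4 (a - b) (2 * τ) +
        theta4 (a + b) (2 * τ) * theta1 (a - b) (2 * τ) := by
  simp only [theta1_eq_neg_thetaChar, theta2_eq_thetaChar, theta4_eq_thetaChar, neg_mul,
    thetaChar_mul_thetaChar hτ]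
  ring_nf

lemma theta1_mul_theta2_eq_sub {τ : ℂ} (hτ : 0 < τ.im) (a b : ℂ) :
    theta1 a τ * theta2 b τ =
      theta1 (a + b) (2 * τ) * theta4 (b - a) (2 * τ) -
        theta4 (a + b) (2 * τ) * theta1 (b - a) (2 * τ) := by
  rw [theta1_mul_theta2 hτ, ← neg_sub b a, theta4_neg, theta1_neg]
  ring

lemma theta1_mul_theta2_self {τ : ℂ} (hτ : 0 < τ.im) (y : ℂ) :
    theta1 y τ * theta2 y τ = theta1 (2 * y) (2 * τ) * theta4 0 (2 * τ) := by
  rw [theta1_mul_theta2 hτ, sub_self, theta1_zero, mul_zero, add_zero, ← two_mul]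

lemma one_add_div_mul_div_eq_div {K : Type*} [Field K] {A B C a b c t : K} (hB : B ≠ 0)
    (ht : t ≠ 0) (hD : A * c - a * C ≠ 0) :
    1 + A / B * ((C * b - c * B) / (c * A - C * a)) =
      (A * b - a * B) * (C * t) / (B * t * (A * c - a * C)) := by
  have hD' : c * A - C * a ≠ 0 := by rwa [mul_comm c, mul_comm C]
  rw [div_mul_div_comm, one_add_div (mul_ne_zero hB hD'),
    div_eq_div_iff (mul_ne_zero hB hD') (mul_ne_zero (mul_ne_zero hB ht) hD)]
  ring

theorem rank_one_perturbation_identity_general (τ v1 vn u1 x : ℂ) (hτ : 0 < τ.im)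
    (h3 : theta1 (vn - u1) τ ≠ 0) (h4 : theta2 (vn - u1) τ ≠ 0)
    (h5 : theta1 (v1 - u1 - x) τ ≠ 0) (h6 : theta2 (v1 - u1 + x) τ ≠ 0) :
    1 + (theta1 (2 * v1 - 2 * u1) (2 * τ) / theta1 (2 * vn - 2 * u1) (2 * τ)) *
        ((theta1 (2 * x) (2 * τ) * theta4 (2 * vn - 2 * u1) (2 * τ) -
            theta4 (2 * x) (2 * τ) * theta1 (2 * vn - 2 * u1) (2 * τ)) /
          (theta4 (2 * x) (2 * τ) * theta1 (2 * v1 - 2 * u1) (2 * τ) -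
            theta1 (2 * x) (2 * τ) * theta4 (2 * v1 - 2 * u1) (2 * τ))) =
      theta1 (v1 - vn) τ * theta2 (v1 + vn - 2 * u1) τ * theta1 x τ * theta2 x τ /
        (theta1 (vn - u1) τ * theta2 (vn - u1) τ * theta1 (v1 - u1 - x) τ *
          theta2 (v1 - u1 + x) τ) := by
  have hN : theta1 (v1 - vn) τ * theta2 (v1 + vn - 2 * u1) τ =
      theta1 (2 * v1 - 2 * u1) (2 * τ) * theta4 (2 * vn - 2 * u1) (2 * τ) -
        theta4 (2 * v1 - 2 * u1) (2 * τ) * theta1 (2 * vn - 2 * u1) (2 * τ) := by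
    convert theta1_mul_theta2_eq_sub hτ (v1 - vn) (v1 + vn - 2 * u1) using 4 <;> ring
  have hD : theta1 (v1 - u1 - x) τ * theta2 (v1 - u1 + x) τ =
      theta1 (2 * v1 - 2 * u1) (2 * τ) * theta4 (2 * x) (2 * τ) -
        theta4 (2 * v1 - 2 * u1) (2 * τ) * theta1 (2 * x) (2 * τ) := by
    convert theta1_mul_theta2_eq_sub hτ (v1 - u1 - x) (v1 - u1 + x) using 4 <;> ring
  have hvn : theta1 (vn - u1) τ * theta2 (vn - u1) τ =
      theta1 (2 * vn - 2 * u1) (2 * τ) * theta4 0 (2 * τ) := by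
    rw [theta1_mul_theta2_self hτ, mul_sub]
  have hvn0 := hvn ▸ mul_ne_zero h3 h4
  rw [mul_assoc _ (theta1 x τ), mul_assoc _ (theta1 (v1 - u1 - x) τ), hN, hD, hvn,
    theta1_mul_theta2_self hτ]
  exact one_add_div_mul_div_eq_div (left_ne_zero_of_mul hvn0) (right_ne_zero_of_mul hvn0)
    (hD ▸ mul_ne_zero h5 h6)

theorem rank_one_perturbation_identity (τ v1 vn u1 x : ℂ) (hτ : 0 < τ.im)
    (h1 : theta1 (2 * vn - 2 * u1) (2 * τ) ≠ 0)
    (h2 : theta4 (2 * x) (2 * τ) * theta1 (2 * v1 - 2 * u1) (2 * τ) -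
        theta1 (2 * x) (2 * τ) * theta4 (2 * v1 - 2 * u1) (2 * τ) ≠ 0)
    (h3 : theta1 (vn - u1) τ ≠ 0) (h4 : theta2 (vn - u1) τ ≠ 0)
    (h5 : theta1 (v1 - u1 - x) τ ≠ 0) (h6 : theta2 (v1 - u1 + x) τ ≠ 0) :
    1 + (theta1 (2 * v1 - 2 * u1) (2 * τ) / theta1 (2 * vn - 2 * u1) (2 * τ)) *
        ((theta1 (2 * x) (2 * τ) * theta4 (2 * vn - 2 * u1) (2 * τ) -
            theta4 (2 * x) (2 * τ) * theta1 (2 * vn - 2 * u1) (2 * τ)) /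
          (theta4 (2 * x) (2 * τ) * theta1 (2 * v1 - 2 * u1) (2 * τ) -
            theta1 (2 * x) (2 * τ) * theta4 (2 * v1 - 2 * u1) (2 * τ))) =
      theta1 (v1 - vn) τ * theta2 (v1 + vn - 2 * u1) τ * theta1 x τ * theta2 x τ /
        (theta1 (vn - u1) τ * theta2 (vn - u1) τ * theta1 (v1 - u1 - x) τ *
          theta2 (v1 - u1 + x) τ) :=
  rank_one_perturbation_identity_general τ v1 vn u1 x hτ h3 h4 h5 h6
end
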